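/- arXiv:q-alg/9703034 — 4 statements merged into one kernel-verified Lean document; each statement's English description precedes it below -/
import Mathlib

section
/- Let m ≥ 1 and let E i j denote the standard basis matrices of M_m(ℂ). Let a ∈ M_m(ℂ) be traceless (trace a = 0). Then for every h ∈ M_m(ℂ), ∑_{i,j} (E i j) * aᴴ * (h * (E j i) - (E j i) * h) = trace(aᴴ * h) • 1. (In the paper's notation this says that the co-frame 1-form θ^a = γ_ν λ^{a†} dγ^{ν†} satisfies θ^a · ad(λ_b) = δ^a_b, i.e. Ω¹_B has a co-frame when B consists of traceless matrices.) -/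
open Matrix

lemma key (m : ℕ) (M : Matrix (Fin m) (Fin m) ℂ) :
    ∑ i : Fin m, ∑ j : Fin m,
      Matrix.single i j (1 : ℂ) * M * Matrix.single j i (1 : ℂ)
    = (Matrix.trace M) • (1 : Matrix (Fin m) (Fin m) ℂ) := by
  ext p q
  simp only [Matrix.sum_apply, Matrix.mul_apply, Matrix.single,
    Matrix.of_apply, ite_and, Matrix.smul_apply, Matrix.one_apply, Matrix.trace,
    Matrix.diag, boole_mul, mul_boole]
  rw [Finset.sum_comm]
  simp [Finset.sum_ite_eq, Finset.sum_ite_eq']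
  by_cases hpq : p = q <;> simp [hpq, eq_comm, smul_eq_mul, Finset.sum_ite_eq']

/-- For traceless `a` and any `h` in `M_m(ℂ)`:
`∑_{i,j} E i j * aᴴ * (h * E j i - E j i * h) = trace(aᴴ * h) • 1`.
This says the co-frame 1-form `θ^a` satisfies `θ^a · ad(λ_b) = δ^a_b`. -/
theorem stmt4 (m : ℕ) (hm : 1 ≤ m) (a : Matrix (Fin m) (Fin m) ℂ)
    (ha : Matrix.trace a = 0) (h : Matrix (Fin m) (Fin m) ℂ) :
    ∑ i : Fin m, ∑ j : Fin m,
      Matrix.single i j (1 : ℂ) * aᴴ *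
        (h * Matrix.single j i (1 : ℂ) - Matrix.single j i (1 : ℂ) * h)
    = (Matrix.trace (aᴴ * h)) • (1 : Matrix (Fin m) (Fin m) ℂ) := by
  have h1 : ∀ i j : Fin m,
      Matrix.single i j (1 : ℂ) * aᴴ *
        (h * Matrix.single j i (1 : ℂ) - Matrix.single j i (1 : ℂ) * h)
      = Matrix.single i j (1 : ℂ) * (aᴴ * h) * Matrix.single j i (1 : ℂ)
        - (Matrix.single i j (1 : ℂ) * aᴴ * Matrix.single j i (1 : ℂ)) * h := by
    intro i j; noncomm_ring
  simp only [h1, Finset.sum_sub_distrib, key, ← Finset.sum_mul]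
  have : Matrix.trace aᴴ = 0 := by simp [Matrix.trace_conjTranspose, ha]
  simp [this]
end

section
/- Let m ≥ 1 and let E i j denote the standard basis matrices of M_m(ℂ). Let a, b ∈ M_m(ℂ) both be traceless. Then ∑_{i,j} [a, E i j] * [b, E j i] = -(m:ℂ) • (a*b) - trace(a*b) • 1. (This is the matrix identity underlying dθ + θ² = -(1/m) tr(λ_a λ_b) θ^a θ^b.) -/
open Matrix

/-- For traceless `a, b ∈ M_m(ℂ)`:
`∑_{i,j} [a, E i j] * [b, E j i] = -m • (a*b) - trace(a*b) • 1`. -/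
theorem stmt8 (m : ℕ) (hm : 1 ≤ m) (a b : Matrix (Fin m) (Fin m) ℂ)
    (ha : Matrix.trace a = 0) (hb : Matrix.trace b = 0) :
    ∑ i : Fin m, ∑ j : Fin m,
      (a * Matrix.single i j (1 : ℂ) - Matrix.single i j (1 : ℂ) * a) *
        (b * Matrix.single j i (1 : ℂ) - Matrix.single j i (1 : ℂ) * b)
    = -((m : ℂ) • (a * b)) - (Matrix.trace (a * b)) • (1 : Matrix (Fin m) (Fin m) ℂ) := by
  have ha' : ∑ i, a i i = 0 := ha
  have hb' : ∑ i, b i i = 0 := hb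
  ext p q
  simp only [Matrix.sum_apply, Matrix.sub_apply, Matrix.smul_apply, Matrix.neg_apply,
    Matrix.one_apply, Matrix.mul_apply, Matrix.single, Matrix.of_apply,
    Matrix.trace, Matrix.diag]
  simp only [ite_and, mul_sub, sub_mul, ite_mul, mul_ite, mul_one, one_mul, mul_zero, zero_mul,
    Finset.sum_sub_distrib, Finset.sum_ite_eq, Finset.sum_ite_eq', Finset.mem_univ, if_true,
    Finset.sum_ite_irrel, Finset.sum_const_zero, smul_eq_mul]
  simp [← Finset.mul_sum, ← Finset.sum_mul, ha', hb', Finset.sum_const, Finset.card_univ, eq_comm, nsmul_eq_mul]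
  ring
end

section
/- Let m ≥ 1 and let E i j denote the standard basis matrices of M_m(ℂ). Let x ∈ M_m(ℂ) be traceless (trace x = 0) and let b, c ∈ M_m(ℂ) be arbitrary. Then ∑_{i,j} [b, (E i j) * x] * [c, E j i] = trace(x*c) • b + trace(x*b) • c - trace(x*b*c) • 1. (With x = λ^{a†} this is the matrix identity underlying dθ^a = -[θ, θ^a] - ⟨λ^a, λ_b λ_c⟩ θ^b θ^c.) -/
open Matrix

/-- For traceless `x` and arbitrary `b, c ∈ M_m(ℂ)`:
`∑_{i,j} [b, E i j * x] * [c, E j i]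
  = trace(x*c) • b + trace(x*b) • c - trace(x*b*c) • 1`. -/
theorem stmt9 (m : ℕ) (hm : 1 ≤ m) (x : Matrix (Fin m) (Fin m) ℂ)
    (hx : Matrix.trace x = 0) (b c : Matrix (Fin m) (Fin m) ℂ) :
    ∑ i : Fin m, ∑ j : Fin m,
      (b * (Matrix.single i j (1 : ℂ) * x) -
          (Matrix.single i j (1 : ℂ) * x) * b) *
        (c * Matrix.single j i (1 : ℂ) - Matrix.single j i (1 : ℂ) * c)
    = (Matrix.trace (x * c)) • b + (Matrix.trace (x * b)) • c
      - (Matrix.trace (x * b * c)) • (1 : Matrix (Fin m) (Fin m) ℂ) := by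
  ext p q
  simp only [Matrix.sum_apply, Matrix.sub_apply, Matrix.add_apply, Matrix.smul_apply,
    Matrix.mul_apply, Matrix.single, Matrix.trace, Matrix.diag, Matrix.one_apply,
    Matrix.of_apply, smul_eq_mul]
  simp only [ite_mul, mul_ite, one_mul, mul_one, zero_mul, mul_zero,
    ite_and, Finset.sum_ite_irrel, Finset.sum_const_zero, Finset.sum_ite_eq,
    Finset.sum_ite_eq', Finset.mem_univ, if_true,
    Finset.sum_sub_distrib, Finset.mul_sum, Finset.sum_mul]
  simp only [sub_mul, mul_sub, ite_mul, mul_ite, zero_mul, mul_zero,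
    Finset.sum_sub_distrib, Finset.sum_ite_irrel, Finset.sum_const_zero,
    Finset.sum_ite_eq, Finset.sum_ite_eq', Finset.mem_univ, if_true]
  have hx' : ∑ i : Fin m, x i i = 0 := hx
  have h0 : (∑ i : Fin m, ∑ j : Fin m, b p i * x j j * c i q) = 0 := by
    rw [Finset.sum_comm]
    calc ∑ j : Fin m, ∑ i : Fin m, b p i * x j j * c i q
        = ∑ j : Fin m, x j j * ∑ i : Fin m, b p i * c i q := by
          refine Finset.sum_congr rfl fun j _ => ?_
          rw [Finset.mul_sum]; exact Finset.sum_congr rfl fun i _ => by ring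
      _ = 0 := by rw [← Finset.sum_mul, hx', zero_mul]
  have h1 : ∀ r : ℂ, (∑ i : Fin m, ∑ j : Fin m, r * x i j * c j i)
      = ∑ i : Fin m, ∑ j : Fin m, x i j * c j i * r := fun r =>
    Finset.sum_congr rfl fun i _ => Finset.sum_congr rfl fun j _ => by ring
  simp only [h0, Finset.sum_mul, sub_zero, h1]
  rcases eq_or_ne p q with h | h
  · subst h; simp only [if_pos rfl]; ring_nf
    simp only [if_true, mul_comm, mul_left_comm, mul_assoc]; ring
  · simp only [if_neg h, if_neg (Ne.symm h)]; ring_nf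
    simp only [mul_comm, mul_left_comm, mul_assoc]
end

section
/- Let m ≥ 1, let B be a subspace of M_m(ℂ) with basis (λ_a)_{a ∈ Fin n}, and suppose (α_r)_{r ∈ Fin R} is a linearly independent family of complex arrays α_r : Fin n × Fin n → ℂ such that for each r, ∑_{a,b} α_r(a,b) • (λ_a * λ_b) lies in B + span_ℂ{1}. Then the dimension of the span of the set {λ_a * λ_b | a,b ∈ Fin n} ∪ {λ_a | a ∈ Fin n} ∪ {1} is at most n² + n + 1 - R. (This is the dimension bound for a generalised algebra of rank R.) -/
open Matrix

/-- Dimension bound for a generalised algebra of rank `R`: if `(λ_a)` is a basis of a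
subspace `B` of `M_m(ℂ)` and `(α_r)_{r<R}` is a linearly independent family of arrays
with `∑_{a,b} α_r(a,b) • λ_a λ_b ∈ B ⊕ ℂ·1`, then
`dim span({λ_a λ_b} ∪ {λ_a} ∪ {1}) ≤ n² + n + 1 - R`. -/
theorem stmt12 (m n R : ℕ) (hm : 1 ≤ m)
    (lam : Fin n → Matrix (Fin m) (Fin m) ℂ)
    (hlam : LinearIndependent ℂ lam)
    (α : Fin R → (Fin n × Fin n → ℂ))
    (hα : LinearIndependent ℂ α)
    (hrel : ∀ r : Fin R,
      (∑ a : Fin n, ∑ b : Fin n, α r (a, b) • (lam a * lam b)) ∈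
        Submodule.span ℂ (Set.range lam) ⊔
          Submodule.span ℂ {(1 : Matrix (Fin m) (Fin m) ℂ)}) :
    Module.finrank ℂ (Submodule.span ℂ
      ((Set.range fun p : Fin n × Fin n => lam p.1 * lam p.2) ∪ Set.range lam ∪
        {(1 : Matrix (Fin m) (Fin m) ℂ)})) ≤ n ^ 2 + n + 1 - R := by
  classical
  haveI : Nonempty (Fin m) := ⟨⟨0, hm⟩⟩
  set W : Submodule ℂ (Matrix (Fin m) (Fin m) ℂ) := Submodule.span ℂ (Set.range lam) ⊔
      Submodule.span ℂ {(1 : Matrix (Fin m) (Fin m) ℂ)} with hW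
  set V : Submodule ℂ (Matrix (Fin m) (Fin m) ℂ) := Submodule.span ℂ
      ((Set.range fun p : Fin n × Fin n => lam p.1 * lam p.2) ∪ Set.range lam ∪
        {(1 : Matrix (Fin m) (Fin m) ℂ)}) with hV
  set Φ : (Fin n × Fin n → ℂ) →ₗ[ℂ] (Matrix (Fin m) (Fin m) ℂ ⧸ W) :=
    Fintype.linearCombination ℂ (fun p : Fin n × Fin n => W.mkQ (lam p.1 * lam p.2)) with hΦ
  -- α r lies in the kernel of Φ
  have hker : ∀ r, α r ∈ LinearMap.ker Φ := by
    intro r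
    rw [LinearMap.mem_ker, hΦ, Fintype.linearCombination_apply]
    have : (∑ p : Fin n × Fin n, α r p • W.mkQ (lam p.1 * lam p.2))
        = W.mkQ (∑ a : Fin n, ∑ b : Fin n, α r (a, b) • (lam a * lam b)) := by
      rw [map_sum, Fintype.sum_prod_type]
      simp only [map_sum, _root_.map_smul]
    rw [this, Submodule.mkQ_apply, Submodule.Quotient.mk_eq_zero]
    exact hrel r
  -- R ≤ dim ker Φ
  have hRker : R ≤ Module.finrank ℂ (LinearMap.ker Φ) := by
    have hli : LinearIndependent ℂ (fun r => (⟨α r, hker r⟩ : LinearMap.ker Φ)) := by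
      apply LinearIndependent.of_comp (LinearMap.ker Φ).subtype
      exact hα
    simpa using hli.fintype_card_le_finrank
  -- rank of range Φ
  have hrange : Module.finrank ℂ (LinearMap.range Φ) ≤ n ^ 2 - R := by
    have h := LinearMap.finrank_range_add_finrank_ker Φ
    have hdom : Module.finrank ℂ (Fin n × Fin n → ℂ) = n ^ 2 := by
      simp [Module.finrank_pi, sq]
    omega
  -- R ≤ n^2
  have hRn : R ≤ n ^ 2 := by
    have := hα.fintype_card_le_finrank
    simpa [Module.finrank_pi, sq] using this
  -- dim W ≤ n + 1
  have hWle : Module.finrank ℂ W ≤ n + 1 := by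
    have h1 : Module.finrank ℂ (Submodule.span ℂ (Set.range lam)) = n := by
      simpa using finrank_span_eq_card hlam
    have h2 : Module.finrank ℂ
        (Submodule.span ℂ {(1 : Matrix (Fin m) (Fin m) ℂ)}) ≤ 1 := by
      rw [finrank_span_singleton (one_ne_zero)]
    calc Module.finrank ℂ W ≤ Module.finrank ℂ (Submodule.span ℂ (Set.range lam))
          + Module.finrank ℂ (Submodule.span ℂ {(1 : Matrix (Fin m) (Fin m) ℂ)}) :=
        Submodule.finrank_add_le_finrank_add_finrank _ _
      _ ≤ n + 1 := by omega
  -- map mkQ V ≤ range Φ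
  have hmap : Submodule.map W.mkQ V ≤ LinearMap.range Φ := by
    rw [hV, Submodule.map_span, Submodule.span_le]
    rintro x ⟨y, hy, rfl⟩
    rcases hy with (⟨p, rfl⟩ | ⟨a, rfl⟩) | rfl
    · exact ⟨Pi.single p 1, by simp [hΦ, Fintype.linearCombination_apply, Pi.single_apply]⟩
    · refine ⟨0, ?_⟩
      rw [map_zero]
      symm
      rw [Submodule.mkQ_apply, Submodule.Quotient.mk_eq_zero]
      exact Submodule.mem_sup_left (Submodule.subset_span ⟨a, rfl⟩)
    · refine ⟨0, ?_⟩
      rw [map_zero]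
      symm
      rw [Submodule.mkQ_apply, Submodule.Quotient.mk_eq_zero]
      exact Submodule.mem_sup_right (Submodule.subset_span rfl)
  -- main rank computation on V
  have key : Module.finrank ℂ V ≤ (n ^ 2 - R) + (n + 1) := by
    set f : V →ₗ[ℂ] (Matrix (Fin m) (Fin m) ℂ ⧸ W) := W.mkQ.comp V.subtype with hf
    have h := LinearMap.finrank_range_add_finrank_ker f
    have h1 : Module.finrank ℂ (LinearMap.range f) ≤ n ^ 2 - R := by
      have hrg : LinearMap.range f = Submodule.map W.mkQ V := by
        rw [hf, LinearMap.range_comp, Submodule.range_subtype]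
      rw [hrg]
      exact le_trans (Submodule.finrank_mono hmap) hrange
    have h2 : Module.finrank ℂ (LinearMap.ker f) ≤ n + 1 := by
      have hk : LinearMap.ker f = Submodule.comap V.subtype W := by
        rw [hf, LinearMap.ker_comp, Submodule.ker_mkQ]
      rw [hk]
      have e := Submodule.equivMapOfInjective V.subtype V.injective_subtype
          (Submodule.comap V.subtype W)
      rw [e.finrank_eq]
      have hle : Submodule.map V.subtype (Submodule.comap V.subtype W) ≤ W :=
        Submodule.map_comap_le _ _
      exact le_trans (Submodule.finrank_mono hle) hWle
    omega
  omega
end
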